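/- Plancherel formula for the Bloch-type transform K_h: if f ∈ L²(𝕋^d) and m is the fixed cutoff, then Σ_{k∈ℤ^d} |f̂(k) m(hk)|² = Σ_{σ ∈ I_Λ^h} ∫_{𝕋^d} |K_h f(σ, y)|² dy, where I_Λ^h := {σ ∈ I_Λ : σ/h ∈ ℤ^d − ⟨Λ⟩} and K_h f(σ, y) is the partial Fourier restriction of f to frequencies σ/h + ⟨Λ⟩/h weighted by m(σ). -/

import Mathlib

open MeasureTheory Real Filter

/-- Coercion of an integer vector to a real vector. -/
def zc {d : ℕ} (k : Fin d → ℤ) : Fin d → ℝ := fun i => (k i : ℝ)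

/-- A submodule Λ of the lattice (ℤ^d)* is primitive: ⟨Λ⟩ ∩ (ℤ^d)* = Λ. -/
def IsPrimitive {d : ℕ} (Λ : Submodule ℤ (Fin d → ℤ)) : Prop :=
  ∀ k : Fin d → ℤ, zc k ∈ Submodule.span ℝ (zc '' (Λ : Set (Fin d → ℤ))) → k ∈ Λ

/-- The fundamental cell [0,2π]^d of 𝕋^d. -/
def cube (d : ℕ) : Set (Fin d → ℝ) := Set.pi Set.univ fun _ : Fin d => Set.Icc (0:ℝ) (2 * π)

lemma exp_int_orth (n : ℤ) :
    ∫ t in Set.Icc (0:ℝ) (2*π), Complex.exp (Complex.I * (n * t)) =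
      if n = 0 then ((2*π : ℝ) : ℂ) else 0 := by
  rw [MeasureTheory.integral_Icc_eq_integral_Ioc,
    ← intervalIntegral.integral_of_le (by positivity : (0:ℝ) ≤ 2*π)]
  by_cases hn : n = 0
  · simp [hn]
  · rw [if_neg hn]
    have hc : (Complex.I * n) ≠ 0 := by
      exact mul_ne_zero Complex.I_ne_zero (by exact_mod_cast hn)
    have key : ∀ t : ℝ, Complex.exp (Complex.I * (n * t)) =
        Complex.exp ((Complex.I * n) * t) := by intro t; ring_nf
    simp_rw [key]
    rw [integral_exp_mul_complex hc]
    have : Complex.I * n * (2*π :ℝ) = n * (2 * π * Complex.I) := by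
      push_cast; ring
    rw [this, Complex.exp_int_mul_two_pi_mul_I]
    simp

lemma exp_vec_orth {d : ℕ} (n : Fin d → ℤ) :
    ∫ y in cube d, Complex.exp (Complex.I * ((∑ i, (n i : ℝ) * y i : ℝ) : ℂ)) =
      if n = 0 then (((2*π)^d : ℝ) : ℂ) else 0 := by
  have hmeas : MeasurableSet (cube d) :=
    MeasurableSet.univ_pi fun _ => measurableSet_Icc
  have key : ∀ y : Fin d → ℝ,
      (cube d).indicator (fun y => Complex.exp (Complex.I * ((∑ i, (n i : ℝ) * y i : ℝ) : ℂ))) y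
        = ∏ i, (Set.Icc (0:ℝ) (2*π)).indicator
            (fun t => Complex.exp (Complex.I * (n i * t))) (y i) := by
    intro y
    by_cases hy : y ∈ cube d
    · rw [Set.indicator_of_mem hy]
      have hyi : ∀ i, y i ∈ Set.Icc (0:ℝ) (2*π) := fun i => hy i (Set.mem_univ i)
      rw [Finset.prod_congr rfl (fun i _ => Set.indicator_of_mem (hyi i) _)]
      rw [← Complex.exp_sum]
      congr 1
      push_cast
      rw [Finset.mul_sum]
    · rw [Set.indicator_of_notMem hy]
      have : ∃ i, y i ∉ Set.Icc (0:ℝ) (2*π) := by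
        by_contra hcon
        push_neg at hcon
        exact hy fun i _ => hcon i
      obtain ⟨i, hi⟩ := this
      refine (Finset.prod_eq_zero (Finset.mem_univ i) ?_).symm
      rw [Set.indicator_of_notMem hi]
  rw [← MeasureTheory.integral_indicator hmeas]
  simp_rw [key]
  rw [MeasureTheory.integral_fintype_prod_volume_eq_prod
    (f := fun i t => (Set.Icc (0:ℝ) (2*π)).indicator
      (fun t => Complex.exp (Complex.I * (n i * t))) t)]
  simp_rw [MeasureTheory.integral_indicator measurableSet_Icc, exp_int_orth]
  by_cases hn : n = 0
  · simp [hn, Finset.prod_const]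
  · rw [if_neg hn]
    obtain ⟨i, hi⟩ := Function.ne_iff.mp hn
    exact Finset.prod_eq_zero (Finset.mem_univ i) (if_neg hi)

-- finiteness of the cutoff support on the lattice
lemma support_finite {d : ℕ} (m : (Fin d → ℝ) → ℝ) (hmc : HasCompactSupport m)
    (h : ℝ) (hh : 0 < h) :
    {k : Fin d → ℤ | (fun i => h * (k i : ℝ)) ∈ tsupport m}.Finite := by
  obtain ⟨R, hR⟩ := hmc.isBounded.subset_closedBall 0
  set N : ℤ := ⌈R / h⌉
  have hsub : {k : Fin d → ℤ | (fun i => h * (k i : ℝ)) ∈ tsupport m} ⊆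
      Set.pi Set.univ fun _ : Fin d => Set.Icc (-N) N := by
    intro k hk i _
    have h1 : (fun i => h * (k i : ℝ)) ∈ Metric.closedBall 0 R := hR hk
    have h2 : |h * (k i : ℝ)| ≤ R := by
      have h2' : ‖(fun i => h * (k i : ℝ))‖ ≤ R := by
        simpa [Metric.mem_closedBall, dist_zero_right] using h1
      calc |h * (k i : ℝ)| = ‖(fun i => h * (k i : ℝ)) i‖ := rfl
        _ ≤ ‖(fun i => h * (k i : ℝ))‖ := by
            exact norm_le_pi_norm (fun j => h * (k j : ℝ)) i
        _ ≤ R := h2'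
    have h3 : |(k i : ℝ)| ≤ R / h := by
      rw [le_div_iff₀ hh]
      calc |(k i : ℝ)| * h = |h * (k i : ℝ)| := by
            rw [abs_mul, abs_of_pos hh]; ring
        _ ≤ R := h2
    have h4 : ((|k i| : ℤ) : ℝ) ≤ (N : ℝ) := by
      rw [Int.cast_abs]
      exact h3.trans (Int.le_ceil _)
    have h5 : |k i| ≤ N := by exact_mod_cast h4
    exact Set.mem_Icc.mpr (abs_le.mp h5)
  exact Set.Finite.subset (Set.Finite.pi fun _ => Set.finite_Icc _ _) hsub

/-- Plancherel formula for the Bloch-type transform K_h.  Grouping the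
Fourier modes of f (with coefficients c) according to their I_Λ-component — i.e. by their
class modulo Λ, the frequencies within a class spanning σ/h + ⟨Λ⟩/h — the cut-off ℓ²-mass
of f equals the sum over σ ∈ I_Λ^h of the L²(𝕋^d)-norms of the grouped pieces K_h f(σ,·):
Σ_k |f̂(k) m(hk)|² = Σ_σ ∫_{𝕋^d} |K_h f(σ,y)|² dy. -/
theorem Kh_plancherel (d : ℕ) (Λ : Submodule ℤ (Fin d → ℤ)) (hΛ : IsPrimitive Λ)
    (m : (Fin d → ℝ) → ℝ) (hm : Continuous m) (hmc : HasCompactSupport m)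
    (h : ℝ) (hh : 0 < h) (c : (Fin d → ℤ) → ℂ) :
    (∑' k : Fin d → ℤ, ‖c k * ((m fun i => h * (k i : ℝ)) : ℂ)‖ ^ 2)
      = ∑' q : (Fin d → ℤ) ⧸ Λ,
          (2 * π) ^ (-(d : ℤ)) *
            ∫ y in cube d,
              ‖∑' k : {k : Fin d → ℤ // (Submodule.Quotient.mk k : (Fin d → ℤ) ⧸ Λ) = q},
                  c k.1 * ((m fun i => h * (k.1 i : ℝ)) : ℂ) *
                    Complex.exp (Complex.I * ((∑ i, (k.1 i : ℝ) * y i : ℝ) : ℂ))‖ ^ 2 := by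
  classical
  set a : (Fin d → ℤ) → ℂ := fun k => c k * ((m fun i => h * (k i : ℝ)) : ℂ) with ha
  have hfin := support_finite m hmc h hh
  set F : Finset (Fin d → ℤ) := hfin.toFinset with hF
  have ha0 : ∀ k ∉ F, a k = 0 := by
    intro k hk
    have : (fun i => h * (k i : ℝ)) ∉ tsupport m := by
      intro hmem
      exact hk (hfin.mem_toFinset.mpr hmem)
    simp [ha, image_eq_zero_of_notMem_tsupport this]
  set mk : (Fin d → ℤ) → (Fin d → ℤ) ⧸ Λ := fun k => Submodule.Quotient.mk k with hmk
  -- LHS as a finite sum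
  have hLHS : (∑' k : Fin d → ℤ, ‖a k‖ ^ 2) = ∑ k ∈ F, ‖a k‖ ^ 2 :=
    tsum_eq_sum fun k hk => by rw [ha0 k hk]; simp
  rw [hLHS]
  -- fix q: compute the inner tsum as a finite sum
  have hinner : ∀ (q : (Fin d → ℤ) ⧸ Λ) (y : Fin d → ℝ),
      (∑' k : {k : Fin d → ℤ // (Submodule.Quotient.mk k : (Fin d → ℤ) ⧸ Λ) = q},
          c k.1 * ((m fun i => h * (k.1 i : ℝ)) : ℂ) *
            Complex.exp (Complex.I * ((∑ i, (k.1 i : ℝ) * y i : ℝ) : ℂ)))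
        = ∑ k ∈ F.filter (fun k => mk k = q),
            a k * Complex.exp (Complex.I * ((∑ i, (k i : ℝ) * y i : ℝ) : ℂ)) := by
    intro q y
    have h1 : (∑' k : {k : Fin d → ℤ // (Submodule.Quotient.mk k : (Fin d → ℤ) ⧸ Λ) = q},
          c k.1 * ((m fun i => h * (k.1 i : ℝ)) : ℂ) *
            Complex.exp (Complex.I * ((∑ i, (k.1 i : ℝ) * y i : ℝ) : ℂ)))
        = ∑ k ∈ F.subtype (fun k => mk k = q),
            a k.1 * Complex.exp (Complex.I * ((∑ i, (k.1 i : ℝ) * y i : ℝ) : ℂ)) := by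
      refine tsum_eq_sum fun b hb => ?_
      have : b.1 ∉ F := fun hbF => hb (Finset.mem_subtype.mpr hbF)
      rw [show c b.1 * ((m fun i => h * (b.1 i : ℝ)) : ℂ) = a b.1 from rfl, ha0 b.1 this,
        zero_mul]
    rw [h1]
    exact Finset.sum_subtype_eq_sum_filter
      (fun k => a k * Complex.exp (Complex.I * ((∑ i, (k i : ℝ) * y i : ℝ) : ℂ)))
  -- per-class Plancherel
  have hterm : ∀ q : (Fin d → ℤ) ⧸ Λ,
      ((2 * π) ^ (-(d : ℤ)) *
        ∫ y in cube d,
          ‖∑' k : {k : Fin d → ℤ // (Submodule.Quotient.mk k : (Fin d → ℤ) ⧸ Λ) = q},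
              c k.1 * ((m fun i => h * (k.1 i : ℝ)) : ℂ) *
                Complex.exp (Complex.I * ((∑ i, (k.1 i : ℝ) * y i : ℝ) : ℂ))‖ ^ 2)
        = ∑ k ∈ F.filter (fun k => mk k = q), ‖a k‖ ^ 2 := by
    intro q
    simp_rw [hinner q]
    set G : Finset (Fin d → ℤ) := F.filter (fun k => mk k = q) with hG
    -- expand the square
    have hnorm : ∀ y : Fin d → ℝ,
        (‖∑ k ∈ G, a k * Complex.exp (Complex.I * ((∑ i, (k i : ℝ) * y i : ℝ) : ℂ))‖ ^ 2 : ℝ)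
          = (∑ k ∈ G, ∑ l ∈ G, a k * (starRingEnd ℂ) (a l) *
              Complex.exp (Complex.I * ((∑ i, ((k i - l i : ℤ) : ℝ) * y i : ℝ) : ℂ))).re := by
      intro y
      have expand : (∑ k ∈ G, a k * Complex.exp (Complex.I * ((∑ i, (k i : ℝ) * y i : ℝ) : ℂ)))
          * (starRingEnd ℂ) (∑ k ∈ G, a k * Complex.exp (Complex.I * ((∑ i, (k i : ℝ) * y i : ℝ) : ℂ)))
          = ∑ k ∈ G, ∑ l ∈ G, a k * (starRingEnd ℂ) (a l) *
              Complex.exp (Complex.I * ((∑ i, ((k i - l i : ℤ) : ℝ) * y i : ℝ) : ℂ)) := by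
        rw [map_sum, Finset.sum_mul_sum]
        refine Finset.sum_congr rfl fun k _ => Finset.sum_congr rfl fun l _ => ?_
        rw [map_mul]
        have hconj : (starRingEnd ℂ) (Complex.exp (Complex.I * ((∑ i, (l i : ℝ) * y i : ℝ) : ℂ)))
            = Complex.exp (-(Complex.I * ((∑ i, (l i : ℝ) * y i : ℝ) : ℂ))) := by
          rw [← Complex.exp_conj, map_mul, Complex.conj_I, Complex.conj_ofReal, neg_mul]
        rw [hconj]
        have hadd : Complex.exp (Complex.I * ((∑ i, (k i : ℝ) * y i : ℝ) : ℂ)) *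
            Complex.exp (-(Complex.I * ((∑ i, (l i : ℝ) * y i : ℝ) : ℂ)))
            = Complex.exp (Complex.I * ((∑ i, ((k i - l i : ℤ) : ℝ) * y i : ℝ) : ℂ)) := by
          rw [← Complex.exp_add]
          congr 1
          push_cast
          rw [← sub_eq_add_neg, ← mul_sub, ← Finset.sum_sub_distrib]
          congr 1
          exact Finset.sum_congr rfl fun i _ => by ring
        rw [← hadd]
        ring
      rw [← expand, Complex.mul_conj, Complex.ofReal_re, Complex.normSq_eq_norm_sq]
    simp_rw [hnorm]
    -- integrability of each double-sum term
    have hcont : ∀ n : Fin d → ℤ, Continuous fun y : Fin d → ℝ =>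
        Complex.exp (Complex.I * ((∑ i, (n i : ℝ) * y i : ℝ) : ℂ)) := by
      intro n
      refine Complex.continuous_exp.comp (continuous_const.mul ?_)
      exact Complex.continuous_ofReal.comp (continuous_finset_sum _ fun i _ =>
        continuous_const.mul (continuous_apply i))
    have hcompact : IsCompact (cube d) := isCompact_univ_pi fun _ => isCompact_Icc
    have hint : ∀ k l : Fin d → ℤ, IntegrableOn
        (fun y : Fin d → ℝ => a k * (starRingEnd ℂ) (a l) *
          Complex.exp (Complex.I * ((∑ i, ((k i - l i : ℤ) : ℝ) * y i : ℝ) : ℂ))) (cube d) := by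
      intro k l
      exact (Continuous.continuousOn (continuous_const.mul (hcont _))).integrableOn_compact
        hcompact
    have hintsum : ∀ k : Fin d → ℤ, IntegrableOn
        (fun y : Fin d → ℝ => ∑ l ∈ G, a k * (starRingEnd ℂ) (a l) *
          Complex.exp (Complex.I * ((∑ i, ((k i - l i : ℤ) : ℝ) * y i : ℝ) : ℂ))) (cube d) :=
      fun k => integrable_finset_sum _ fun l _ => hint k l
    have hintsum2 : IntegrableOn
        (fun y : Fin d → ℝ => ∑ k ∈ G, ∑ l ∈ G, a k * (starRingEnd ℂ) (a l) *
          Complex.exp (Complex.I * ((∑ i, ((k i - l i : ℤ) : ℝ) * y i : ℝ) : ℂ))) (cube d) :=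
      integrable_finset_sum _ fun k _ => hintsum k
    have hre0 := _root_.integral_re (μ := volume.restrict (cube d)) hintsum2
    simp only [RCLike.re_to_complex] at hre0
    rw [hre0]
    rw [MeasureTheory.integral_finset_sum _ fun k _ => hintsum k]
    have hswap : ∀ k ∈ G, (∫ y in cube d, ∑ l ∈ G, a k * (starRingEnd ℂ) (a l) *
          Complex.exp (Complex.I * ((∑ i, ((k i - l i : ℤ) : ℝ) * y i : ℝ) : ℂ)))
        = (((2*π)^d : ℝ) : ℂ) * (a k * (starRingEnd ℂ) (a k)) := by
      intro k hk
      rw [MeasureTheory.integral_finset_sum _ fun l _ => hint k l]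
      have hone : ∀ l ∈ G, (∫ y in cube d, a k * (starRingEnd ℂ) (a l) *
            Complex.exp (Complex.I * ((∑ i, ((k i - l i : ℤ) : ℝ) * y i : ℝ) : ℂ)))
          = if (fun i => k i - l i) = (0 : Fin d → ℤ) then
              (((2*π)^d : ℝ) : ℂ) * (a k * (starRingEnd ℂ) (a l)) else 0 := by
        intro l _
        rw [MeasureTheory.integral_const_mul, exp_vec_orth (fun i => k i - l i)]
        split <;> ring
      rw [Finset.sum_congr rfl hone]
      have hkl : ∀ l : Fin d → ℤ, ((fun i => k i - l i) = (0 : Fin d → ℤ)) ↔ k = l := by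
        intro l
        constructor
        · intro he; funext i
          have := congrFun he i
          simpa [sub_eq_zero] using this
        · intro he; subst he; funext i; simp
      simp_rw [hkl]
      rw [Finset.sum_ite_eq G k (fun l => (((2*π)^d : ℝ) : ℂ) * (a k * (starRingEnd ℂ) (a l))),
        if_pos hk]
    rw [Finset.sum_congr rfl hswap]
    have hre : (∑ k ∈ G, (((2*π)^d : ℝ) : ℂ) * (a k * (starRingEnd ℂ) (a k))).re
        = ((2*π)^d : ℝ) * ∑ k ∈ G, ‖a k‖ ^ 2 := by
      rw [Complex.re_sum, Finset.mul_sum]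
      refine Finset.sum_congr rfl fun k _ => ?_
      rw [Complex.mul_conj]
      norm_cast
      simp [Complex.normSq_eq_norm_sq]
    rw [hre, ← mul_assoc]
    have hcancel : (2*π : ℝ) ^ (-(d : ℤ)) * (2*π)^d = 1 := by
      rw [zpow_neg, zpow_natCast]
      exact inv_mul_cancel₀ (pow_ne_zero _ (by positivity))
    rw [hcancel, one_mul]
  rw [tsum_congr hterm]
  have hq0 : ∀ q ∉ F.image mk, (∑ k ∈ F.filter (fun k => mk k = q), ‖a k‖ ^ 2) = 0 := by
    intro q hq
    have hempty : F.filter (fun k => mk k = q) = ∅ :=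
      Finset.filter_eq_empty_iff.mpr fun {k} hk hkq => hq (hkq ▸ Finset.mem_image_of_mem mk hk)
    rw [hempty, Finset.sum_empty]
  rw [tsum_eq_sum hq0]
  exact (Finset.sum_fiberwise_of_maps_to (fun k hk => Finset.mem_image_of_mem mk hk) _).symm
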